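/- Let 0 ≤ θ < π/4 and let q_1,…,q_n, p_1,…,p_n ∈ S_θ be nonzero, z ∈ S_θ. Suppose C > 0 satisfies C² ≥ (sup_{1≤k≤n} |p_k/q_k|)/cos(2θ). If |z| ≤ C then the finite continued fraction 1/(q_1 + 1/(p_1 + 1/(q_2 + ··· + 1/(q_n + 1/(p_n + z))···))) has modulus at most C. -/

import Mathlib

/-!
By induction on the depth, every tail `w` of the continued fraction lies in `S_θ` and has
`|w| ≤ C`. For the induction step put `u = 1/(p + w)`; as `S_θ` is a convex cone stable under
inversion, `u` and `q + u` lie in `S_θ`. Since `|arg q - arg u| ≤ 2θ`, projecting `q + u` onto the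
direction of `u` gives `|q + u| ≥ |q| cos 2θ + |u| ≥ |p|/C² + 1/(|p| + C) ≥ 1/C`, the last
inequality being `|p|² ≥ 0`.
-/

open Real

/-- The finite continued fraction `F_0 = z`,
`F_k = 1/(q_{n-k+1} + 1/(p_{n-k+1} + F_{k-1}))`, so that `F_n` is
`1/(q_1 + 1/(p_1 + 1/(q_2 + ⋯ + 1/(q_n + 1/(p_n + z))⋯)))`. -/
noncomputable def contFrac (n : ℕ) (q p : ℕ → ℂ) (z : ℂ) : ℕ → ℂ :=
  Nat.rec z (fun k F => 1 / (q (n - k) + 1 / (p (n - k) + F)))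

open ComplexConjugate

namespace Complex

theorem abs_arg_le_iff_norm_mul_cos_le_re {θ : ℝ} (h0 : 0 ≤ θ) (hπ : θ ≤ π) {w : ℂ} :
    |w.arg| ≤ θ ↔ ‖w‖ * Real.cos θ ≤ w.re := by
  rcases eq_or_ne w 0 with rfl | hw
  · simpa using h0
  rw [← norm_mul_cos_arg, ← Real.cos_abs w.arg, mul_le_mul_iff_right₀ (norm_pos_iff.mpr hw)]
  exact (strictAntiOn_cos.le_iff_ge ⟨h0, hπ⟩ ⟨abs_nonneg _, abs_arg_le_pi w⟩).symm

theorem abs_arg_add_le {θ : ℝ} (hθ : θ ≤ π / 2) {v w : ℂ} (hv : |v.arg| ≤ θ)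
    (hw : |w.arg| ≤ θ) : |(v + w).arg| ≤ θ := by
  have h0 : 0 ≤ θ := (abs_nonneg _).trans hv
  have hπ : θ ≤ π := by linarith [pi_pos]
  have hcos : 0 ≤ Real.cos θ := cos_nonneg_of_mem_Icc ⟨by linarith, hθ⟩
  rw [abs_arg_le_iff_norm_mul_cos_le_re h0 hπ] at hv hw ⊢
  calc ‖v + w‖ * Real.cos θ ≤ (‖v‖ + ‖w‖) * Real.cos θ := by gcongr; exact norm_add_le v w
    _ ≤ (v + w).re := by rw [add_re]; linarith

theorem re_mul_conj (q u : ℂ) :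
    (q * conj u).re = ‖q‖ * ‖u‖ * Real.cos (q.arg - u.arg) := by
  rw [Real.cos_sub, mul_re, conj_re, conj_im, ← norm_mul_cos_arg q, ← norm_mul_cos_arg u,
    ← norm_mul_sin_arg q, ← norm_mul_sin_arg u]
  ring

theorem norm_mul_cos_two_mul_add_norm_le_norm_add {θ : ℝ} (hθ : θ ≤ π / 2) {q u : ℂ}
    (hq : |q.arg| ≤ θ) (hu : |u.arg| ≤ θ) :
    ‖q‖ * Real.cos (2 * θ) + ‖u‖ ≤ ‖q + u‖ := by
  have hcos : Real.cos (2 * θ) ≤ Real.cos (q.arg - u.arg) := by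
    rw [← Real.cos_abs (q.arg - u.arg)]
    exact cos_le_cos_of_nonneg_of_le_pi (abs_nonneg _) (by linarith)
      ((abs_sub _ _).trans (by linarith))
  rcases eq_or_ne u 0 with rfl | hu0
  · simpa using mul_le_of_le_one_right (norm_nonneg q) (Real.cos_le_one _)
  refine le_of_mul_le_mul_left ?_ (norm_pos_iff.mpr hu0)
  calc ‖u‖ * (‖q‖ * Real.cos (2 * θ) + ‖u‖)
      ≤ ‖q‖ * ‖u‖ * Real.cos (q.arg - u.arg) + ‖u‖ ^ 2 := by
        nlinarith [mul_nonneg (norm_nonneg q) (norm_nonneg u)]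
    _ = ((q + u) * conj u).re := by
        rw [add_mul, add_re, re_mul_conj, mul_conj', ← ofReal_pow, ofReal_re]
    _ ≤ ‖(q + u) * conj u‖ := re_le_norm _
    _ = ‖u‖ * ‖q + u‖ := by rw [norm_mul, RCLike.norm_conj, mul_comm]

end Complex

theorem inv_le_div_sq_add_inv_add {C P : ℝ} (hC : 0 < C) (hP : 0 ≤ P) :
    C⁻¹ ≤ P / C ^ 2 + (P + C)⁻¹ := by
  rw [div_add' _ _ _ (by positivity), le_div_iff₀ (by positivity)]
  field_simp
  nlinarith [sq_nonneg P]

open Complex in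
theorem abs_arg_le_and_norm_le_one_div_add_one_div {θ C : ℝ} (hθ : θ < π / 4) (hC : 0 < C)
    {p q w : ℂ} (hp0 : p ≠ 0) (hp : |p.arg| ≤ θ) (hq : |q.arg| ≤ θ) (hw : w = 0 ∨ |w.arg| ≤ θ)
    (hwC : ‖w‖ ≤ C) (hpq : ‖p‖ / C ^ 2 ≤ ‖q‖ * Real.cos (2 * θ)) :
    |(1 / (q + 1 / (p + w))).arg| ≤ θ ∧ ‖1 / (q + 1 / (p + w))‖ ≤ C := by
  have hθ' : θ ≤ π / 2 := by linarith [pi_pos]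
  have hw' : |w.arg| ≤ θ := hw.elim (fun h => by simpa [h] using (abs_nonneg _).trans hp) id
  have hu : |(p + w)⁻¹.arg| ≤ θ := by rw [abs_arg_inv]; exact abs_arg_add_le hθ' hp hw'
  have hpw0 : p + w ≠ 0 := by
    have hre_p : 0 < p.re :=
      (abs_arg_lt_pi_div_two_iff.mp (by linarith [pi_pos])).resolve_right hp0
    have hre_w : 0 ≤ w.re := abs_arg_le_pi_div_two_iff.mp (by linarith)
    intro h
    have := congrArg re h
    rw [add_re, zero_re] at this
    linarith
  simp only [one_div, abs_arg_inv, norm_inv]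
  refine ⟨abs_arg_add_le hθ' hq hu, ?_⟩
  have hpwC : ‖p + w‖ ≤ ‖p‖ + C := (norm_add_le p w).trans (by linarith)
  refine inv_le_of_inv_le₀ hC ?_
  calc C⁻¹ ≤ ‖p‖ / C ^ 2 + (‖p‖ + C)⁻¹ := inv_le_div_sq_add_inv_add hC (norm_nonneg p)
    _ ≤ ‖q‖ * Real.cos (2 * θ) + ‖(p + w)⁻¹‖ := by rw [norm_inv]; gcongr
    _ ≤ ‖q + (p + w)⁻¹‖ :=
        norm_mul_cos_two_mul_add_norm_le_norm_add hθ' hq hu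

theorem value_region_origin_circle_general (θ : ℝ) (hθ : θ < π / 4)
    (n : ℕ) (q p : ℕ → ℂ) (z : ℂ)
    (hq : ∀ k, 1 ≤ k → k ≤ n → q k ≠ 0 ∧ |(q k).arg| ≤ θ)
    (hp : ∀ k, 1 ≤ k → k ≤ n → p k ≠ 0 ∧ |(p k).arg| ≤ θ)
    (hz : z = 0 ∨ |z.arg| ≤ θ)
    (C : ℝ) (hC : 0 < C)
    (hC2 : ∀ k, 1 ≤ k → k ≤ n → ‖p k / q k‖ / Real.cos (2 * θ) ≤ C ^ 2)
    (hzC : ‖z‖ ≤ C) :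
    ‖contFrac n q p z n‖ ≤ C := by
  suffices h : ∀ k ≤ n,
      (contFrac n q p z k = 0 ∨ |(contFrac n q p z k).arg| ≤ θ) ∧ ‖contFrac n q p z k‖ ≤ C from
    (h n le_rfl).2
  intro k
  induction k with
  | zero => exact fun _ => ⟨hz, hzC⟩
  | succ k ih =>
    intro hk
    obtain ⟨hF, hFC⟩ := ih (by omega)
    obtain ⟨hq0, hqθ⟩ := hq (n - k) (by omega) (by omega)
    obtain ⟨hp0, hpθ⟩ := hp (n - k) (by omega) (by omega)
    have hcos : 0 < Real.cos (2 * θ) :=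
      cos_pos_of_mem_Ioo ⟨by linarith [(abs_nonneg _).trans hpθ, pi_pos], by linarith⟩
    have hpq : ‖p (n - k)‖ / C ^ 2 ≤ ‖q (n - k)‖ * Real.cos (2 * θ) := by
      have := hC2 (n - k) (by omega) (by omega)
      rw [norm_div, div_div, div_le_iff₀ (mul_pos (norm_pos_iff.mpr hq0) hcos)] at this
      rw [div_le_iff₀ (by positivity)]
      linarith
    obtain ⟨hθ', hC'⟩ := abs_arg_le_and_norm_le_one_div_add_one_div hθ hC hp0 hpθ hqθ hF hFC hpq
    exact ⟨Or.inr hθ', hC'⟩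

theorem value_region_origin_circle (θ : ℝ) (hθ0 : 0 ≤ θ) (hθ : θ < π / 4)
    (n : ℕ) (q p : ℕ → ℂ) (z : ℂ)
    (hq : ∀ k, 1 ≤ k → k ≤ n → q k ≠ 0 ∧ |(q k).arg| ≤ θ)
    (hp : ∀ k, 1 ≤ k → k ≤ n → p k ≠ 0 ∧ |(p k).arg| ≤ θ)
    (hz : z = 0 ∨ |z.arg| ≤ θ)
    (C : ℝ) (hC : 0 < C)
    (hC2 : ∀ k, 1 ≤ k → k ≤ n → ‖p k / q k‖ / Real.cos (2 * θ) ≤ C ^ 2)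
    (hzC : ‖z‖ ≤ C) :
    ‖contFrac n q p z n‖ ≤ C :=
  value_region_origin_circle_general θ hθ n q p z hq hp hz C hC hC2 hzC
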